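/- Let P and Q be two joint pmfs for (X,Y,U) on common finite alphabets such that the conditional distributions Q_{XY|U=u} are defined for every u with P_U(u) > 0. Let P_m = min over (x,y,u) with P(x,y,u) > 0 of P(x,y|u), and δ = max over u with P_U(u) > 0 of ‖P_{XY|U=u} − Q_{XY|U=u}‖_TV. Then ρ_{m,Q}(X;Y|U) ≥ (ρ_{m,P}(X;Y|U) − 4δ/P_m) / (1 + 4δ/P_m), where ρ_{m,P} and ρ_{m,Q} denote the conditional maximal correlation computed under P and Q respectively. -/

import Mathlib

open scoped BigOperators Classical

noncomputable section

namespace GCI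

/-- A bundled finite alphabet. -/
structure FinAlph : Type 1 where
  carrier : Type
  [fin : Fintype carrier]

instance : CoeSort FinAlph Type := ⟨FinAlph.carrier⟩
instance (A : FinAlph) : Fintype A := A.fin

variable {Ω : Type} [Fintype Ω]

/-- `p` is a probability mass function on the finite sample space `Ω`. -/
def IsPMF (p : Ω → ℝ) : Prop := (∀ ω, 0 ≤ p ω) ∧ ∑ ω, p ω = 1

/-- Expectation of a real random variable `f` under the pmf `p`. -/
def expec (p : Ω → ℝ) (f : Ω → ℝ) : ℝ := ∑ ω, p ω * f ω

/-- Marginal pmf of the random variable `X` under `p`. -/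
def marg {𝒳 : Type} (p : Ω → ℝ) (X : Ω → 𝒳) (x : 𝒳) : ℝ :=
  ∑ ω, if X ω = x then p ω else 0

/-- Conditional expectation `E[f | U = u]`. -/
def cexp {𝒰 : Type} (p : Ω → ℝ) (U : Ω → 𝒰) (u : 𝒰) (f : Ω → ℝ) : ℝ :=
  (∑ ω, if U ω = u then p ω * f ω else 0) / marg p U u

/-- `E[cov(f, g | U)]`. -/
def ccov {𝒰 : Type} (p : Ω → ℝ) (U : Ω → 𝒰) (f g : Ω → ℝ) : ℝ :=
  expec p fun ω => (f ω - cexp p U (U ω) f) * (g ω - cexp p U (U ω) g)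

/-- `E[var(f | U)]`. -/
def cvar {𝒰 : Type} (p : Ω → ℝ) (U : Ω → 𝒰) (f : Ω → ℝ) : ℝ := ccov p U f f

/-- Conditional Pearson correlation `ρ(f; g | U)`. -/
def ccorr {𝒰 : Type} (p : Ω → ℝ) (U : Ω → 𝒰) (f g : Ω → ℝ) : ℝ :=
  if 0 < cvar p U f * cvar p U g then
    ccov p U f g / (Real.sqrt (cvar p U f) * Real.sqrt (cvar p U g))
  else 0

/-- Conditional correlation ratio `θ(X; Y | U)` for a real-valued `X`. -/
def cratio {𝒴 𝒰 : Type} (p : Ω → ℝ) (U : Ω → 𝒰) (X : Ω → ℝ) (Y : Ω → 𝒴) : ℝ :=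
  ⨆ g : 𝒴 × 𝒰 → ℝ, ccorr p U X fun ω => g (Y ω, U ω)

/-- Conditional maximal correlation `ρ_m(X; Y | U)`. -/
def maxCorr {𝒳 𝒴 𝒰 : Type} (p : Ω → ℝ) (U : Ω → 𝒰) (X : Ω → 𝒳) (Y : Ω → 𝒴) : ℝ :=
  ⨆ f : 𝒳 × 𝒰 → ℝ, ⨆ g : 𝒴 × 𝒰 → ℝ,
    ccorr p U (fun ω => f (X ω, U ω)) fun ω => g (Y ω, U ω)

/-- Unconditional Pearson correlation. -/
def corr0 (p : Ω → ℝ) (f g : Ω → ℝ) : ℝ := ccorr p (fun _ => ()) f g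

/-- Unconditional correlation ratio `θ(X;Y)`. -/
def ratio0 {𝒴 : Type} (p : Ω → ℝ) (X : Ω → ℝ) (Y : Ω → 𝒴) : ℝ :=
  cratio p (fun _ => ()) X Y

/-- Unconditional maximal correlation `ρ_m(X;Y)`. -/
def maxCorr0 {𝒳 𝒴 : Type} (p : Ω → ℝ) (X : Ω → 𝒳) (Y : Ω → 𝒴) : ℝ :=
  maxCorr p (fun _ => ()) X Y

/-- Shannon entropy (base 2) of the random variable `X` under `p`. -/
def ent {𝒳 : Type} [Fintype 𝒳] (p : Ω → ℝ) (X : Ω → 𝒳) : ℝ :=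
  ∑ x, -(marg p X x * Real.logb 2 (marg p X x))

/-- Conditional Shannon entropy `H(X | U)`. -/
def condEnt {𝒳 𝒰 : Type} [Fintype 𝒳] [Fintype 𝒰] (p : Ω → ℝ) (X : Ω → 𝒳) (U : Ω → 𝒰) : ℝ :=
  ent p (fun ω => (X ω, U ω)) - ent p U

/-- Mutual information `I(X; U)`. -/
def mutInfo {𝒳 𝒰 : Type} [Fintype 𝒳] [Fintype 𝒰] (p : Ω → ℝ) (X : Ω → 𝒳) (U : Ω → 𝒰) : ℝ :=
  ent p X + ent p U - ent p fun ω => (X ω, U ω)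

/-- Almost-sure equality of two discrete random variables. -/
def AEEq {𝒱 : Type} (p : Ω → ℝ) (f g : Ω → 𝒱) : Prop := ∀ ω, 0 < p ω → f ω = g ω

/-- The Gács–Körner common information `C_GK(X;Y)`. -/
def CGK {𝒳 𝒴 : Type} (p : Ω → ℝ) (X : Ω → 𝒳) (Y : Ω → 𝒴) : ℝ :=
  sSup { r | ∃ (𝒱 : FinAlph) (f : 𝒳 → 𝒱) (g : 𝒴 → 𝒱),
    AEEq p (fun ω => f (X ω)) (fun ω => g (Y ω)) ∧ r = ent p fun ω => f (X ω) }

/-- The conditional Gács–Körner common information `C_GK(X;Y|U)`. -/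
def CGKcond {𝒳 𝒴 𝒰 : Type} [Fintype 𝒰] (p : Ω → ℝ) (X : Ω → 𝒳) (Y : Ω → 𝒴)
    (U : Ω → 𝒰) : ℝ :=
  sSup { r | ∃ (𝒱 : FinAlph) (f : 𝒳 × 𝒰 → 𝒱) (g : 𝒴 × 𝒰 → 𝒱),
    AEEq p (fun ω => f (X ω, U ω)) (fun ω => g (Y ω, U ω)) ∧
    r = condEnt p (fun ω => f (X ω, U ω)) U }

/-- The `β`-approximate common information (approximate information-correlation function). -/
def Cbeta {𝒳 𝒴 : Type} [Fintype 𝒳] [Fintype 𝒴] (p : 𝒳 × 𝒴 → ℝ) (β : ℝ) : ℝ :=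
  sInf { r | ∃ (𝒰 : FinAlph) (q : (𝒳 × 𝒴) × 𝒰 → ℝ),
    IsPMF q ∧ (∀ a, marg q Prod.fst a = p a) ∧
    maxCorr q Prod.snd (fun a => a.1.1) (fun a => a.1.2) ≤ β ∧
    r = mutInfo q Prod.fst Prod.snd }

/-- The `n`-th term in the definition of the `β`-exact common information:
the normalized smallest entropy of an auxiliary variable for `n` i.i.d. copies. -/
def KbetaN {𝒳 𝒴 : Type} [Fintype 𝒳] [Fintype 𝒴] (p : 𝒳 × 𝒴 → ℝ) (β : ℝ) (n : ℕ) : ℝ :=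
  sInf { r | ∃ (𝒰 : FinAlph) (q : ((Fin n → 𝒳) × (Fin n → 𝒴)) × 𝒰 → ℝ),
    IsPMF q ∧
    (∀ a : (Fin n → 𝒳) × (Fin n → 𝒴), marg q Prod.fst a = ∏ i, p (a.1 i, a.2 i)) ∧
    maxCorr q Prod.snd (fun a => a.1.1) (fun a => a.1.2) ≤ β ∧
    r = (1 / (n : ℝ)) * ent q Prod.snd }

/-- The `β`-exact common information (exact information-correlation function). -/
def Kbeta {𝒳 𝒴 : Type} [Fintype 𝒳] [Fintype 𝒴] (p : 𝒳 × 𝒴 → ℝ) (β : ℝ) : ℝ :=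
  Filter.limUnder Filter.atTop fun n => KbetaN p β n


/-- Total variation distance between two pmfs on a finite alphabet:
`‖p − q‖_TV = (1/2)·Σ_a |p a − q a|`. -/
def tvDist {α : Type} [Fintype α] (p q : α → ℝ) : ℝ := (1 / 2) * ∑ a, |p a - q a|

/-! Fix `f`, `g` with `ρ_P(f(X,U); g(Y,U) | U) = ρ > t := 4δ/P_m`. On each fibre `U = u`, centre
`f(·,u)` and `g(·,u)` under `P_{XY|U=u}` and set them to zero off its support. Every atom of
`P_{XY|U=u}` has mass at least `P_m`, so the centred functions are bounded by `√(V_u / P_m)`,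
`V_u` their conditional variance; hence replacing `P_{XY|U=u}` by `Q_{XY|U=u}`, at total variation
distance `≤ δ`, lowers the conditional covariance by at most `t √(V_u W_u)` and raises the
variances by a factor at most `1 + t`. After rescaling each fibre by `√(P_U(u) / Q_U(u))`, the
`Q`-fibres carry their `P`-weights, and Cauchy–Schwarz over `u` gives a pair whose correlation
under `Q` is at least `(ρ - t)/(1 + t)`. -/

section FiniteCov

variable {α : Type*} [Fintype α]

def cov (μ F G : α → ℝ) : ℝ :=
  ∑ a, μ a * (F a * G a) - (∑ a, μ a * F a) * (∑ a, μ a * G a)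

lemma cov_mul_mul (μ F G : α → ℝ) (c d : ℝ) :
    cov μ (fun a => c * F a) (fun a => d * G a) = c * d * cov μ F G := by
  have h : ∀ (k : ℝ) (H : α → ℝ), ∑ a, μ a * (k * H a) = k * ∑ a, μ a * H a := fun k H => by
    rw [Finset.mul_sum]; exact Finset.sum_congr rfl fun a _ => by ring
  have hFG : ∑ a, μ a * (c * F a * (d * G a)) = c * d * ∑ a, μ a * (F a * G a) := by
    rw [← h]; exact Finset.sum_congr rfl fun a _ => by ring
  simp only [cov, h, hFG]
  ring

lemma abs_sum_mul_sub_sum_mul_le (μ ν h : α → ℝ) {M : ℝ} (hh : ∀ a, |h a| ≤ M) :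
    |∑ a, ν a * h a - ∑ a, μ a * h a| ≤ (∑ a, |μ a - ν a|) * M := by
  rw [← Finset.sum_sub_distrib, Finset.sum_mul]
  refine (Finset.abs_sum_le_sum_abs _ _).trans (Finset.sum_le_sum fun a _ => ?_)
  rw [← sub_mul, abs_mul, abs_sub_comm]
  exact mul_le_mul_of_nonneg_left (hh a) (abs_nonneg _)

lemma sum_mul_sub_le_cov {μ ν F G : α → ℝ} {A B : ℝ} (hF0 : ∑ a, μ a * F a = 0)
    (hG0 : ∑ a, μ a * G a = 0) (hF : ∀ a, |F a| ≤ A) (hG : ∀ a, |G a| ≤ B) :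
    ∑ a, μ a * (F a * G a) - ((∑ a, |μ a - ν a|) + (∑ a, |μ a - ν a|) ^ 2) * (A * B)
      ≤ cov ν F G := by
  set D := ∑ a, |μ a - ν a|
  have hFG : ∀ a, |F a * G a| ≤ A * B := fun a => by
    rw [abs_mul]; exact mul_le_mul (hF a) (hG a) (abs_nonneg _) ((abs_nonneg _).trans (hF a))
  have e1 := abs_le.1 (abs_sum_mul_sub_sum_mul_le μ ν _ hFG)
  have e2 := abs_sum_mul_sub_sum_mul_le μ ν F hF
  have e3 := abs_sum_mul_sub_sum_mul_le μ ν G hG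
  rw [hF0, sub_zero] at e2
  rw [hG0, sub_zero] at e3
  have hprod : (∑ a, ν a * F a) * (∑ a, ν a * G a) ≤ D * A * (D * B) := by
    refine (le_abs_self _).trans ?_
    rw [abs_mul]
    exact mul_le_mul e2 e3 (abs_nonneg _) ((abs_nonneg _).trans e2)
  unfold cov
  nlinarith

lemma cov_self_le_sum_mul_sq_add (μ ν F : α → ℝ) {M : ℝ} (hF : ∀ a, F a ^ 2 ≤ M) :
    cov ν F F ≤ ∑ a, μ a * F a ^ 2 + (∑ a, |μ a - ν a|) * M := by
  have e := (abs_le.1 (abs_sum_mul_sub_sum_mul_le μ ν (fun a => F a ^ 2)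
    fun a => (abs_of_nonneg (sq_nonneg _)).trans_le (hF a))).2
  unfold cov
  simp only [← sq] at e ⊢
  nlinarith [sq_nonneg (∑ a, ν a * F a)]

end FiniteCov

section CenterOn

variable {α β γ : Type*} [Fintype α] {μ : α → ℝ}

def centerOn (μ : α → ℝ) (π : α → β) (f : β → ℝ) (b : β) : ℝ :=
  if ∃ a, π a = b ∧ 0 < μ a then f b - ∑ a, μ a * f (π a) else 0

lemma mul_centerOn_comp (hμ0 : ∀ a, 0 ≤ μ a) (π : α → β) (f : β → ℝ) (a : α) :
    μ a * centerOn μ π f (π a) = μ a * (f (π a) - ∑ a', μ a' * f (π a')) := by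
  rcases (hμ0 a).eq_or_lt with h | h
  · rw [← h, zero_mul, zero_mul]
  · rw [centerOn, if_pos ⟨a, rfl, h⟩]

lemma sum_mul_centerOn_comp (hμ0 : ∀ a, 0 ≤ μ a) (hμ1 : ∑ a, μ a = 1) (π : α → β)
    (f : β → ℝ) : ∑ a, μ a * centerOn μ π f (π a) = 0 := by
  simp only [mul_centerOn_comp hμ0, mul_sub, Finset.sum_sub_distrib, ← Finset.sum_mul, hμ1,
    one_mul, sub_self]

lemma cov_comp_eq_sum_mul_centerOn (hμ0 : ∀ a, 0 ≤ μ a) (hμ1 : ∑ a, μ a = 1) (π : α → β)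
    (π' : α → γ) (f : β → ℝ) (g : γ → ℝ) :
    cov μ (fun a => f (π a)) (fun a => g (π' a))
      = ∑ a, μ a * (centerOn μ π f (π a) * centerOn μ π' g (π' a)) := by
  set m := ∑ a, μ a * f (π a)
  set m' := ∑ a, μ a * g (π' a)
  have h : ∀ a, μ a * (centerOn μ π f (π a) * centerOn μ π' g (π' a))
      = μ a * (f (π a) * g (π' a)) - m' * (μ a * f (π a)) - m * (μ a * g (π' a))
        + m * m' * μ a := fun a => by
    rw [← mul_assoc, mul_centerOn_comp hμ0, mul_comm, ← mul_assoc, mul_comm (centerOn _ _ _ _),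
      mul_centerOn_comp hμ0]
    ring
  simp only [h, Finset.sum_add_distrib, Finset.sum_sub_distrib, ← Finset.mul_sum, hμ1, cov]
  ring

/-- Where `centerOn μ π f` is nonzero it is carried by an atom of `μ` of mass at least `Pm`. -/
lemma mul_sq_centerOn_le (hμ0 : ∀ a, 0 ≤ μ a) {Pm : ℝ} (hPm : ∀ a, 0 < μ a → Pm ≤ μ a)
    (π : α → β) (f : β → ℝ) (b : β) :
    Pm * centerOn μ π f b ^ 2 ≤ ∑ a, μ a * centerOn μ π f (π a) ^ 2 := by
  have hsum : 0 ≤ ∑ a, μ a * centerOn μ π f (π a) ^ 2 :=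
    Finset.sum_nonneg fun a _ => mul_nonneg (hμ0 a) (sq_nonneg _)
  by_cases hb : ∃ a, π a = b ∧ 0 < μ a
  · obtain ⟨a, rfl, ha⟩ := hb
    calc Pm * centerOn μ π f (π a) ^ 2 ≤ μ a * centerOn μ π f (π a) ^ 2 :=
          mul_le_mul_of_nonneg_right (hPm a ha) (sq_nonneg _)
      _ ≤ _ := Finset.single_le_sum (f := fun a => μ a * centerOn μ π f (π a) ^ 2)
          (fun a _ => mul_nonneg (hμ0 a) (sq_nonneg _)) (Finset.mem_univ a)
  · rw [centerOn, if_neg hb]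
    simpa using hsum

end CenterOn

lemma abs_le_sqrt_div_of_mul_sq_le {ι : Type*} {F : ι → ℝ} {Pm V : ℝ} (hPm : 0 < Pm)
    (hF : ∀ a, Pm * F a ^ 2 ≤ V) (a : ι) : |F a| ≤ √V / √Pm := by
  rw [← Real.sqrt_div' _ hPm.le]
  exact Real.abs_le_sqrt ((le_div_iff₀' hPm).2 (hF a))

section TVPerturbation

variable {α : Type*} [Fintype α] {μ ν F G : α → ℝ} {Pm δ : ℝ}

lemma sum_mul_sub_le_cov_of_tv (hPm : 0 < Pm) (hδ : 2 * δ ≤ 1)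
    (hTV : ∑ a, |μ a - ν a| ≤ 2 * δ) (hF0 : ∑ a, μ a * F a = 0) (hG0 : ∑ a, μ a * G a = 0)
    (hF : ∀ a, Pm * F a ^ 2 ≤ ∑ a, μ a * F a ^ 2) (hG : ∀ a, Pm * G a ^ 2 ≤ ∑ a, μ a * G a ^ 2) :
    ∑ a, μ a * (F a * G a)
        - 4 * δ / Pm * (√(∑ a, μ a * F a ^ 2) * √(∑ a, μ a * G a ^ 2))
      ≤ cov ν F G := by
  set D := ∑ a, |μ a - ν a|
  have hD0 : 0 ≤ D := Finset.sum_nonneg fun a _ => abs_nonneg _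
  have hD : D + D ^ 2 ≤ 4 * δ := by nlinarith
  refine le_trans ?_ (sum_mul_sub_le_cov hF0 hG0 (abs_le_sqrt_div_of_mul_sq_le hPm hF)
    (abs_le_sqrt_div_of_mul_sq_le hPm hG))
  have hAB : √(∑ a, μ a * F a ^ 2) / √Pm * (√(∑ a, μ a * G a ^ 2) / √Pm)
      = √(∑ a, μ a * F a ^ 2) * √(∑ a, μ a * G a ^ 2) / Pm := by
    rw [div_mul_div_comm, Real.mul_self_sqrt hPm.le]
  rw [hAB, mul_div_assoc', div_mul_eq_mul_div]
  gcongr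

lemma cov_self_le_of_tv (hμ0 : ∀ a, 0 ≤ μ a) (hPm : 0 < Pm) (hTV : ∑ a, |μ a - ν a| ≤ 2 * δ)
    (hF : ∀ a, Pm * F a ^ 2 ≤ ∑ a, μ a * F a ^ 2) :
    cov ν F F ≤ (1 + 4 * δ / Pm) * ∑ a, μ a * F a ^ 2 := by
  set V := ∑ a, μ a * F a ^ 2
  have hV : 0 ≤ V / Pm :=
    div_nonneg (Finset.sum_nonneg fun a _ => mul_nonneg (hμ0 a) (sq_nonneg _)) hPm.le
  have hD0 : 0 ≤ ∑ a, |μ a - ν a| := Finset.sum_nonneg fun a _ => abs_nonneg _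
  have := cov_self_le_sum_mul_sq_add μ ν F fun a => (le_div_iff₀' hPm).2 (hF a)
  have hVeq : 4 * δ / Pm * V = 4 * δ * (V / Pm) := by ring
  nlinarith

end TVPerturbation

section Conditional

variable {𝒳 𝒴 𝒰 : Type} {p : Ω → ℝ}

lemma marg_nonneg (hp0 : ∀ ω, 0 ≤ p ω) (X : Ω → 𝒳) (x : 𝒳) : 0 ≤ marg p X x :=
  Finset.sum_nonneg fun ω _ => by split_ifs; exacts [hp0 ω, le_rfl]

lemma le_marg (hp0 : ∀ ω, 0 ≤ p ω) (X : Ω → 𝒳) (ω : Ω) : p ω ≤ marg p X (X ω) := by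
  simpa [marg] using Finset.single_le_sum (f := fun ω' => if X ω' = X ω then p ω' else 0)
    (fun ω' _ => by split_ifs; exacts [hp0 ω', le_rfl]) (Finset.mem_univ ω)

lemma sum_fiber_eq_marg (U : Ω → 𝒰) (u : 𝒰) : ∑ ω with U ω = u, p ω = marg p U u :=
  Finset.sum_filter _ _

lemma sum_fiber_mul_eq_marg_mul_cexp (hp0 : ∀ ω, 0 ≤ p ω) (U : Ω → 𝒰) (u : 𝒰) (h : Ω → ℝ) :
    ∑ ω with U ω = u, p ω * h ω = marg p U u * cexp p U u h := by
  rcases eq_or_ne (marg p U u) 0 with h0 | h0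
  · rw [h0, zero_mul]
    rw [← sum_fiber_eq_marg, Finset.sum_eq_zero_iff_of_nonneg fun ω _ => hp0 ω] at h0
    exact Finset.sum_eq_zero fun ω hω => by rw [h0 ω hω, zero_mul]
  · rw [cexp, mul_div_cancel₀ _ h0, Finset.sum_filter]

lemma ccov_eq_sum_marg_mul [Fintype 𝒰] (hp0 : ∀ ω, 0 ≤ p ω) (U : Ω → 𝒰) (φ ψ : Ω → ℝ) :
    ccov p U φ ψ = ∑ u, marg p U u *
      (cexp p U u (fun ω => φ ω * ψ ω) - cexp p U u φ * cexp p U u ψ) := by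
  rw [ccov, expec, ← Finset.sum_fiberwise Finset.univ U]
  refine Finset.sum_congr rfl fun u _ => ?_
  set c := cexp p U u φ
  set d := cexp p U u ψ
  have h : ∀ ω ∈ Finset.univ.filter (U · = u),
      p ω * ((φ ω - cexp p U (U ω) φ) * (ψ ω - cexp p U (U ω) ψ))
        = p ω * (φ ω * ψ ω) - c * (p ω * ψ ω) - d * (p ω * φ ω) + c * d * p ω := by
    intro ω hω
    rw [(Finset.mem_filter.1 hω).2]
    ring
  rw [Finset.sum_congr rfl h]
  simp only [Finset.sum_add_distrib, Finset.sum_sub_distrib, ← Finset.mul_sum,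
    sum_fiber_mul_eq_marg_mul_cexp hp0, sum_fiber_eq_marg]
  ring

/-- `P_{XY|U=u}`; it is identically `0` when `P_U(u) = 0`. -/
def condPMF (p : Ω → ℝ) (X : Ω → 𝒳) (Y : Ω → 𝒴) (U : Ω → 𝒰) (u : 𝒰) (a : 𝒳 × 𝒴) : ℝ :=
  marg p (fun ω => (X ω, Y ω, U ω)) (a.1, a.2, u) / marg p U u

variable (X : Ω → 𝒳) (Y : Ω → 𝒴) (U : Ω → 𝒰)

lemma condPMF_nonneg (hp0 : ∀ ω, 0 ≤ p ω) (u : 𝒰) (a : 𝒳 × 𝒴) : 0 ≤ condPMF p X Y U u a :=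
  div_nonneg (marg_nonneg hp0 _ _) (marg_nonneg hp0 _ _)

lemma marg_triple_le_marg (hp0 : ∀ ω, 0 ≤ p ω) (x : 𝒳) (y : 𝒴) (u : 𝒰) :
    marg p (fun ω => (X ω, Y ω, U ω)) (x, y, u) ≤ marg p U u :=
  Finset.sum_le_sum fun ω _ => by
    split_ifs with h h' <;> simp_all

lemma condPMF_le_one (hp0 : ∀ ω, 0 ≤ p ω) (u : 𝒰) (a : 𝒳 × 𝒴) : condPMF p X Y U u a ≤ 1 :=
  div_le_one_of_le₀ (marg_triple_le_marg X Y U hp0 a.1 a.2 u) (marg_nonneg hp0 U u)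

variable [Fintype 𝒳] [Fintype 𝒴]

lemma cexp_eq_sum_condPMF_mul (u : 𝒰) (H : 𝒳 × 𝒴 → 𝒰 → ℝ) :
    cexp p U u (fun ω => H (X ω, Y ω) (U ω)) = ∑ a, condPMF p X Y U u a * H a u := by
  simp only [cexp, condPMF, div_mul_eq_mul_div, ← Finset.sum_div, marg, Finset.sum_mul]
  rw [Finset.sum_comm]
  congr 1
  refine Finset.sum_congr rfl fun ω _ => ?_
  split_ifs with hω
  · rw [Finset.sum_eq_single (X ω, Y ω) (fun a _ ha => by simp [Prod.ext_iff] at ha ⊢; tauto)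
      (by simp), if_pos (by rw [hω]), hω]
  · simp [hω]

lemma ccov_eq_sum_marg_mul_cov [Fintype 𝒰] (hp0 : ∀ ω, 0 ≤ p ω) (H K : 𝒳 × 𝒴 → 𝒰 → ℝ) :
    ccov p U (fun ω => H (X ω, Y ω) (U ω)) (fun ω => K (X ω, Y ω) (U ω))
      = ∑ u, marg p U u * cov (condPMF p X Y U u) (fun a => H a u) (fun a => K a u) := by
  rw [ccov_eq_sum_marg_mul hp0]
  refine Finset.sum_congr rfl fun u _ => ?_
  rw [cexp_eq_sum_condPMF_mul X Y U u H, cexp_eq_sum_condPMF_mul X Y U u K,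
    cexp_eq_sum_condPMF_mul X Y U u fun a u => H a u * K a u, cov]

lemma sum_condPMF {u : 𝒰} (hu : marg p U u ≠ 0) : ∑ a, condPMF p X Y U u a = 1 := by
  simpa [cexp, ← Finset.sum_filter, sum_fiber_eq_marg, hu] using
    (cexp_eq_sum_condPMF_mul (p := p) X Y U u fun _ _ => 1).symm

end Conditional

section Correlation

variable {𝒳 𝒴 𝒰 : Type} {p : Ω → ℝ} (U : Ω → 𝒰)

lemma cvar_nonneg (hp0 : ∀ ω, 0 ≤ p ω) (f : Ω → ℝ) : 0 ≤ cvar p U f :=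
  Finset.sum_nonneg fun ω _ => mul_nonneg (hp0 ω) (mul_self_nonneg _)

lemma ccov_sq_le_cvar_mul_cvar (hp0 : ∀ ω, 0 ≤ p ω) (f g : Ω → ℝ) :
    ccov p U f g ^ 2 ≤ cvar p U f * cvar p U g :=
  Finset.sum_sq_le_sum_mul_sum_of_sq_le_mul _
    (fun ω _ => mul_nonneg (hp0 ω) (mul_self_nonneg _))
    (fun ω _ => mul_nonneg (hp0 ω) (mul_self_nonneg _)) fun ω _ => le_of_eq (by ring)

lemma ccorr_le_one (hp0 : ∀ ω, 0 ≤ p ω) (f g : Ω → ℝ) : ccorr p U f g ≤ 1 := by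
  unfold ccorr
  split_ifs with h
  · rw [← Real.sqrt_mul (cvar_nonneg U hp0 f), div_le_one (Real.sqrt_pos.2 h)]
    exact Real.le_sqrt_of_sq_le (ccov_sq_le_cvar_mul_cvar U hp0 f g)
  · exact zero_le_one

lemma div_sqrt_mul_sqrt_le_ccorr (hp0 : ∀ ω, 0 ≤ p ω) {f g : Ω → ℝ} {c a b : ℝ} (hc0 : 0 < c)
    (hc : c ≤ ccov p U f g) (ha : cvar p U f ≤ a) (hb : cvar p U g ≤ b) :
    c / (√a * √b) ≤ ccorr p U f g := by
  have hfg : 0 < cvar p U f * cvar p U g :=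
    (pow_pos (hc0.trans_le hc) 2).trans_le (ccov_sq_le_cvar_mul_cvar U hp0 f g)
  have hf := cvar_nonneg U hp0 f
  have hg := cvar_nonneg U hp0 g
  rw [ccorr, if_pos hfg, ← Real.sqrt_mul hf, ← Real.sqrt_mul (hf.trans ha)]
  exact div_le_div₀ (hc0.le.trans hc) hc (Real.sqrt_pos.2 hfg)
    (Real.sqrt_le_sqrt (mul_le_mul ha hb hg (hf.trans ha)))

variable (X : Ω → 𝒳) (Y : Ω → 𝒴)

lemma ccorr_le_maxCorr (hp0 : ∀ ω, 0 ≤ p ω) (f : 𝒳 × 𝒰 → ℝ) (g : 𝒴 × 𝒰 → ℝ) :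
    ccorr p U (fun ω => f (X ω, U ω)) (fun ω => g (Y ω, U ω)) ≤ maxCorr p U X Y := by
  have hbdd_g : BddAbove (Set.range fun g : 𝒴 × 𝒰 → ℝ =>
      ccorr p U (fun ω => f (X ω, U ω)) fun ω => g (Y ω, U ω)) :=
    ⟨1, by rintro _ ⟨g, rfl⟩; exact ccorr_le_one U hp0 _ _⟩
  have hbdd_f : BddAbove (Set.range fun f : 𝒳 × 𝒰 → ℝ => ⨆ g : 𝒴 × 𝒰 → ℝ,
      ccorr p U (fun ω => f (X ω, U ω)) fun ω => g (Y ω, U ω)) :=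
    ⟨1, by rintro _ ⟨f, rfl⟩; exact ciSup_le fun g => ccorr_le_one U hp0 _ _⟩
  exact (le_ciSup hbdd_g g).trans (le_ciSup hbdd_f f)

lemma maxCorr_nonneg (hp0 : ∀ ω, 0 ≤ p ω) : 0 ≤ maxCorr p U X Y := by
  refine le_of_eq_of_le ?_ (ccorr_le_maxCorr U X Y hp0 0 0)
  simp [ccorr, cvar, ccov, expec, cexp]

end Correlation

lemma sum_mul_sqrt_mul_sqrt_le {ι : Type*} [Fintype ι] {w V W : ι → ℝ} (hw : ∀ i, 0 ≤ w i)
    (hV : ∀ i, 0 ≤ V i) (hW : ∀ i, 0 ≤ W i) :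
    ∑ i, w i * (√(V i) * √(W i)) ≤ √(∑ i, w i * V i) * √(∑ i, w i * W i) := by
  refine le_of_eq_of_le (Finset.sum_congr rfl fun i _ => ?_)
    (Real.sum_sqrt_mul_sqrt_le _ (fun i => mul_nonneg (hw i) (hV i))
      fun i => mul_nonneg (hw i) (hW i))
  rw [Real.sqrt_mul (hw i), Real.sqrt_mul (hw i), mul_mul_mul_comm, Real.mul_self_sqrt (hw i)]

section Transfer

variable {𝒳 𝒴 𝒰 β γ : Type} {p q : Ω → ℝ} (X : Ω → 𝒳) (Y : Ω → 𝒴) (U : Ω → 𝒰)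

lemma marg_mul_sqrt_div_mul_self (hp0 : ∀ ω, 0 ≤ p ω) (hq0 : ∀ ω, 0 ≤ q ω)
    (hdef : ∀ u, 0 < marg p U u → 0 < marg q U u) (u : 𝒰) :
    marg q U u * (√(marg p U u / marg q U u) * √(marg p U u / marg q U u)) = marg p U u := by
  rw [Real.mul_self_sqrt (div_nonneg (marg_nonneg hp0 U u) (marg_nonneg hq0 U u))]
  rcases (marg_nonneg hp0 U u).eq_or_lt with hu | hu
  · rw [← hu, zero_div, mul_zero]
  · exact mul_div_cancel₀ _ (hdef u hu).ne'

variable [Fintype 𝒳] [Fintype 𝒴] [Fintype 𝒰]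

/-- The factor `√(P_U(u) / Q_U(u))` makes the fibres `U = u` carry their `P`-weights under `Q`. -/
def transfer (p q : Ω → ℝ) (X : Ω → 𝒳) (Y : Ω → 𝒴) (U : Ω → 𝒰) (π : 𝒳 × 𝒴 → β)
    (f : β × 𝒰 → ℝ) (bu : β × 𝒰) : ℝ :=
  √(marg p U bu.2 / marg q U bu.2) *
    centerOn (condPMF p X Y U bu.2) π (fun b => f (b, bu.2)) bu.1

lemma ccov_eq_sum_marg_mul_sum_centerOn (hp0 : ∀ ω, 0 ≤ p ω) (π : 𝒳 × 𝒴 → β)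
    (π' : 𝒳 × 𝒴 → γ) (f : β × 𝒰 → ℝ) (g : γ × 𝒰 → ℝ) :
    ccov p U (fun ω => f (π (X ω, Y ω), U ω)) (fun ω => g (π' (X ω, Y ω), U ω))
      = ∑ u, marg p U u * ∑ a, condPMF p X Y U u a *
          (centerOn (condPMF p X Y U u) π (fun b => f (b, u)) (π a) *
            centerOn (condPMF p X Y U u) π' (fun c => g (c, u)) (π' a)) := by
  refine (ccov_eq_sum_marg_mul_cov X Y U hp0 (fun a u => f (π a, u)) fun a u => g (π' a, u)).trans
    (Finset.sum_congr rfl fun u _ => ?_)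
  rcases eq_or_ne (marg p U u) 0 with hu | hu
  · rw [hu, zero_mul, zero_mul]
  · rw [cov_comp_eq_sum_mul_centerOn (condPMF_nonneg X Y U hp0 u) (sum_condPMF X Y U hu) π π'
      (fun b => f (b, u)) (fun c => g (c, u))]

lemma ccov_transfer_eq_sum_marg_mul_cov (hp0 : ∀ ω, 0 ≤ p ω) (hq0 : ∀ ω, 0 ≤ q ω)
    (hdef : ∀ u, 0 < marg p U u → 0 < marg q U u) (π : 𝒳 × 𝒴 → β) (π' : 𝒳 × 𝒴 → γ)
    (f : β × 𝒰 → ℝ) (g : γ × 𝒰 → ℝ) :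
    ccov q U (fun ω => transfer p q X Y U π f (π (X ω, Y ω), U ω))
        (fun ω => transfer p q X Y U π' g (π' (X ω, Y ω), U ω))
      = ∑ u, marg p U u * cov (condPMF q X Y U u)
          (fun a => centerOn (condPMF p X Y U u) π (fun b => f (b, u)) (π a))
          (fun a => centerOn (condPMF p X Y U u) π' (fun c => g (c, u)) (π' a)) := by
  refine (ccov_eq_sum_marg_mul_cov X Y U hq0 (fun a u => transfer p q X Y U π f (π a, u))
    fun a u => transfer p q X Y U π' g (π' a, u)).trans (Finset.sum_congr rfl fun u _ => ?_)
  simp only [transfer]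
  rw [cov_mul_mul, ← mul_assoc, marg_mul_sqrt_div_mul_self U hp0 hq0 hdef]

variable {Pm δ : ℝ} (hp0 : ∀ ω, 0 ≤ p ω) (hq0 : ∀ ω, 0 ≤ q ω)
  (hdef : ∀ u, 0 < marg p U u → 0 < marg q U u) (hPm0 : 0 < Pm)
  (hPm : ∀ u a, 0 < condPMF p X Y U u a → Pm ≤ condPMF p X Y U u a)
  (hTV : ∀ u, 0 < marg p U u → ∑ a, |condPMF p X Y U u a - condPMF q X Y U u a| ≤ 2 * δ)
include hp0 hq0 hdef hPm0 hPm hTV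

lemma ccov_sub_le_ccov_transfer (hδ0 : 0 ≤ δ) (hδ1 : 2 * δ ≤ 1) (π : 𝒳 × 𝒴 → β)
    (π' : 𝒳 × 𝒴 → γ) (f : β × 𝒰 → ℝ) (g : γ × 𝒰 → ℝ) :
    ccov p U (fun ω => f (π (X ω, Y ω), U ω)) (fun ω => g (π' (X ω, Y ω), U ω))
        - 4 * δ / Pm * (√(cvar p U fun ω => f (π (X ω, Y ω), U ω))
          * √(cvar p U fun ω => g (π' (X ω, Y ω), U ω)))
      ≤ ccov q U (fun ω => transfer p q X Y U π f (π (X ω, Y ω), U ω))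
          (fun ω => transfer p q X Y U π' g (π' (X ω, Y ω), U ω)) := by
  rw [cvar, cvar, ccov_eq_sum_marg_mul_sum_centerOn X Y U hp0,
    ccov_eq_sum_marg_mul_sum_centerOn X Y U hp0, ccov_eq_sum_marg_mul_sum_centerOn X Y U hp0,
    ccov_transfer_eq_sum_marg_mul_cov X Y U hp0 hq0 hdef]
  simp only [← sq]
  set P := condPMF p X Y U
  set F := fun u => centerOn (P u) π (fun b => f (b, u))
  set G := fun u => centerOn (P u) π' (fun c => g (c, u))
  have hP0 := condPMF_nonneg X Y U hp0
  calc _ ≤ ∑ u, (marg p U u * ∑ a, P u a * (F u (π a) * G u (π' a))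
        - 4 * δ / Pm * (marg p U u
          * (√(∑ a, P u a * F u (π a) ^ 2) * √(∑ a, P u a * G u (π' a) ^ 2)))) := by
        simp only [Finset.sum_sub_distrib, ← Finset.mul_sum]
        gcongr
        exact sum_mul_sqrt_mul_sqrt_le (marg_nonneg hp0 U)
          (fun u => Finset.sum_nonneg fun a _ => mul_nonneg (hP0 u a) (sq_nonneg _))
          (fun u => Finset.sum_nonneg fun a _ => mul_nonneg (hP0 u a) (sq_nonneg _))
    _ ≤ _ := by
        refine Finset.sum_le_sum fun u _ => ?_
        rcases (marg_nonneg hp0 U u).eq_or_lt with hu | hu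
        · simp [← hu]
        have hμ1 := sum_condPMF X Y U hu.ne'
        have h := mul_le_mul_of_nonneg_left (sum_mul_sub_le_cov_of_tv hPm0 hδ1 (hTV u hu)
          (sum_mul_centerOn_comp (hP0 u) hμ1 π _) (sum_mul_centerOn_comp (hP0 u) hμ1 π' _)
          (fun a => mul_sq_centerOn_le (hP0 u) (hPm u) π (fun b => f (b, u)) (π a))
          (fun a => mul_sq_centerOn_le (hP0 u) (hPm u) π' (fun c => g (c, u)) (π' a))) hu.le
        linear_combination h

lemma cvar_transfer_le (π : 𝒳 × 𝒴 → β) (f : β × 𝒰 → ℝ) :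
    cvar q U (fun ω => transfer p q X Y U π f (π (X ω, Y ω), U ω))
      ≤ (1 + 4 * δ / Pm) * cvar p U fun ω => f (π (X ω, Y ω), U ω) := by
  rw [cvar, cvar, ccov_eq_sum_marg_mul_sum_centerOn X Y U hp0,
    ccov_transfer_eq_sum_marg_mul_cov X Y U hp0 hq0 hdef, Finset.mul_sum]
  simp only [← sq]
  refine Finset.sum_le_sum fun u _ => ?_
  rcases (marg_nonneg hp0 U u).eq_or_lt with hu | hu
  · simp [← hu]
  have hP0 := condPMF_nonneg X Y U hp0 u
  rw [mul_left_comm]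
  exact mul_le_mul_of_nonneg_left (cov_self_le_of_tv hP0 hPm0 (hTV u hu)
    fun a => mul_sq_centerOn_le hP0 (hPm u) π (fun b => f (b, u)) (π a)) hu.le

lemma ccorr_le_add_mul_maxCorr (hδ0 : 0 ≤ δ) (hPm1 : Pm ≤ 1) (f : 𝒳 × 𝒰 → ℝ) (g : 𝒴 × 𝒰 → ℝ) :
    ccorr p U (fun ω => f (X ω, U ω)) (fun ω => g (Y ω, U ω))
      ≤ 4 * δ / Pm + (1 + 4 * δ / Pm) * maxCorr q U X Y := by
  set t := 4 * δ / Pm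
  set r := ccorr p U (fun ω => f (X ω, U ω)) (fun ω => g (Y ω, U ω))
  set Vf := cvar p U fun ω => f (X ω, U ω)
  set Vg := cvar p U fun ω => g (Y ω, U ω)
  have ht0 : 0 ≤ t := by positivity
  have hM := maxCorr_nonneg U X Y hq0
  rcases le_or_gt r t with hr | hr
  · nlinarith
  have hδ1 : 2 * δ ≤ 1 := by
    have := (div_lt_one hPm0).1 (hr.trans_le (ccorr_le_one U hp0 _ _))
    linarith
  have hVfg : 0 < Vf * Vg := by
    by_contra h
    have : r = 0 := if_neg h
    linarith
  have hsqrt : 0 < √Vf * √Vg := by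
    rw [← Real.sqrt_mul (cvar_nonneg U hp0 _)]; exact Real.sqrt_pos.2 hVfg
  have hcov : ccov p U (fun ω => f (X ω, U ω)) (fun ω => g (Y ω, U ω)) = r * (√Vf * √Vg) := by
    rw [show r = _ / (√Vf * √Vg) from if_pos hVfg, div_mul_cancel₀ _ hsqrt.ne']
  have hcov_q := ccov_sub_le_ccov_transfer X Y U hp0 hq0 hdef hPm0 hPm hTV hδ0 hδ1
    Prod.fst Prod.snd f g
  rw [hcov] at hcov_q
  have hcorr_q := div_sqrt_mul_sqrt_le_ccorr U hq0 (mul_pos (sub_pos.2 hr) hsqrt)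
    (by linarith)
    (cvar_transfer_le X Y U hp0 hq0 hdef hPm0 hPm hTV Prod.fst f)
    (cvar_transfer_le X Y U hp0 hq0 hdef hPm0 hPm hTV Prod.snd g)
  have h1t : (0 : ℝ) < 1 + t := by linarith
  rw [Real.sqrt_mul h1t.le, Real.sqrt_mul h1t.le, mul_mul_mul_comm, Real.mul_self_sqrt h1t.le,
    mul_div_mul_right _ _ hsqrt.ne'] at hcorr_q
  have := (div_le_iff₀ h1t).1 (hcorr_q.trans (ccorr_le_maxCorr U X Y hq0 _ _))
  linarith

end Transfer

section Constants

variable {𝒳 𝒴 𝒰 : Type} {p q : Ω → ℝ} (X : Ω → 𝒳) (Y : Ω → 𝒴) (U : Ω → 𝒰)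

/-- `P_m = min {P(x,y|u) : P(x,y,u) > 0}`. -/
def minCondProb (p : Ω → ℝ) (X : Ω → 𝒳) (Y : Ω → 𝒴) (U : Ω → 𝒰) : ℝ :=
  sInf {r | ∃ x y u, 0 < marg p (fun ω => (X ω, Y ω, U ω)) (x, y, u) ∧
    r = condPMF p X Y U u (x, y)}

lemma minCondProb_le (hp0 : ∀ ω, 0 ≤ p ω) {u : 𝒰} {a : 𝒳 × 𝒴}
    (ha : 0 < condPMF p X Y U u a) : minCondProb p X Y U ≤ condPMF p X Y U u a := by
  have hxyu : 0 < marg p (fun ω => (X ω, Y ω, U ω)) (a.1, a.2, u) :=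
    (marg_nonneg hp0 _ _).lt_of_ne fun h => by simp [condPMF, ← h] at ha
  refine csInf_le ⟨0, ?_⟩ ⟨a.1, a.2, u, hxyu, rfl⟩
  rintro _ ⟨x, y, u, -, rfl⟩
  exact condPMF_nonneg X Y U hp0 u (x, y)

variable [Fintype 𝒳] [Fintype 𝒴]

/-- `δ = max {‖P_{XY|U=u} − Q_{XY|U=u}‖_TV : P_U(u) > 0}`. -/
def maxCondTV (p q : Ω → ℝ) (X : Ω → 𝒳) (Y : Ω → 𝒴) (U : Ω → 𝒰) : ℝ :=
  sSup {r | ∃ u, 0 < marg p U u ∧ r = tvDist (condPMF p X Y U u) (condPMF q X Y U u)}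

lemma exists_condPMF_eq_minCondProb [Fintype 𝒰] (hp : IsPMF p) :
    ∃ u a, 0 < condPMF p X Y U u a ∧ minCondProb p X Y U = condPMF p X Y U u a := by
  set S := {r | ∃ x y u, 0 < marg p (fun ω => (X ω, Y ω, U ω)) (x, y, u) ∧
    r = condPMF p X Y U u (x, y)}
  have hfin : S.Finite :=
    (Set.finite_range fun v : 𝒳 × 𝒴 × 𝒰 => condPMF p X Y U v.2.2 (v.1, v.2.1)).subset
      (by rintro _ ⟨x, y, u, -, rfl⟩; exact ⟨(x, y, u), rfl⟩)
  obtain ⟨ω, -, hω⟩ := Finset.exists_lt_of_sum_lt (s := Finset.univ) (f := fun _ => (0 : ℝ))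
    (g := p) (by simp [hp.2])
  have hne : S.Nonempty :=
    ⟨_, X ω, Y ω, U ω, hω.trans_le (le_marg hp.1 (fun ω => (X ω, Y ω, U ω)) ω), rfl⟩
  obtain ⟨x, y, u, hxyu, hmin⟩ := hne.csInf_mem hfin
  exact ⟨u, (x, y), div_pos hxyu (hxyu.trans_le (marg_triple_le_marg X Y U hp.1 x y u)), hmin⟩

lemma maxCondTV_nonneg : 0 ≤ maxCondTV p q X Y U :=
  Real.sSup_nonneg <| by
    rintro _ ⟨u, -, rfl⟩
    exact mul_nonneg (by norm_num) (Finset.sum_nonneg fun a _ => abs_nonneg _)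

lemma sum_abs_condPMF_sub_le [Fintype 𝒰] {u : 𝒰} (hu : 0 < marg p U u) :
    ∑ a, |condPMF p X Y U u a - condPMF q X Y U u a| ≤ 2 * maxCondTV p q X Y U := by
  have hbdd : BddAbove {r | ∃ u, 0 < marg p U u ∧
      r = tvDist (condPMF p X Y U u) (condPMF q X Y U u)} :=
    ((Set.finite_range fun u => tvDist (condPMF p X Y U u) (condPMF q X Y U u)).subset
      (by rintro _ ⟨u, -, rfl⟩; exact ⟨u, rfl⟩)).bddAbove
  have : _ ≤ maxCondTV p q X Y U := le_csSup hbdd ⟨u, hu, rfl⟩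
  rw [tvDist] at this
  linarith

end Constants

/-- TV bound on conditional maximal correlation. If `Q_{XY|U=u}` is
defined for every `u` with `P_U(u) > 0`, `P_m` is the minimum conditional probability
`P(x,y|u)` over the support of `P`, and `δ` is the maximal total variation distance between
the conditional distributions of `(X,Y)` given `U = u` under `P` and `Q`, then
`ρ_{m,Q}(X;Y|U) ≥ (ρ_{m,P}(X;Y|U) − 4δ/P_m)/(1 + 4δ/P_m)`. -/
theorem maxCorr_tv_bound {Ω 𝒳 𝒴 𝒰 : Type} [Fintype Ω] [Fintype 𝒳] [Fintype 𝒴] [Fintype 𝒰]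
    (p q : Ω → ℝ) (hp : IsPMF p) (hq : IsPMF q)
    (X : Ω → 𝒳) (Y : Ω → 𝒴) (U : Ω → 𝒰)
    (hdef : ∀ u, 0 < marg p U u → 0 < marg q U u)
    (Pm δ : ℝ)
    (hPm : Pm = sInf { r | ∃ x y u, 0 < marg p (fun ω => (X ω, Y ω, U ω)) (x, y, u) ∧
      r = marg p (fun ω => (X ω, Y ω, U ω)) (x, y, u) / marg p U u })
    (hδ : δ = sSup { r | ∃ u, 0 < marg p U u ∧
      r = tvDist
        (fun a : 𝒳 × 𝒴 => marg p (fun ω => (X ω, Y ω, U ω)) (a.1, a.2, u) / marg p U u)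
        (fun a : 𝒳 × 𝒴 => marg q (fun ω => (X ω, Y ω, U ω)) (a.1, a.2, u) / marg q U u) }) :
    (maxCorr p U X Y - 4 * δ / Pm) / (1 + 4 * δ / Pm) ≤ maxCorr q U X Y := by
  change Pm = minCondProb p X Y U at hPm
  change δ = maxCondTV p q X Y U at hδ
  obtain ⟨u₀, a₀, hpos, hmin⟩ := exists_condPMF_eq_minCondProb X Y U hp
  have hPm0 : 0 < Pm := by rw [hPm, hmin]; exact hpos
  have hPm1 : Pm ≤ 1 := by rw [hPm, hmin]; exact condPMF_le_one X Y U hp.1 u₀ a₀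
  have hδ0 : 0 ≤ δ := hδ ▸ maxCondTV_nonneg X Y U
  have hcorr : maxCorr p U X Y ≤ 4 * δ / Pm + (1 + 4 * δ / Pm) * maxCorr q U X Y :=
    ciSup_le fun f => ciSup_le fun g =>
      ccorr_le_add_mul_maxCorr X Y U hp.1 hq.1 hdef hPm0
        (fun _ _ ha => hPm ▸ minCondProb_le X Y U hp.1 ha)
        (fun _ hu => hδ ▸ sum_abs_condPMF_sub_le X Y U hu) hδ0 hPm1 f g
  rw [div_le_iff₀ (by positivity)]
  linarith

end GCI
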